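/- Let k ≥ 3 be an integer, let G be a graph and let S be a subset of V(G) with |S| ≥ 2, and let G' be obtained from G by adding k − 2 new vertices, each joined to all vertices of S. If G' contains k internally disjoint trees connecting S, then at least two of these k trees contain no new vertex, and consequently G contains two internally disjoint trees connecting S. -/

import Mathlib

/-!
Two trees of an internally disjoint family meet only in `S`, so each of the `k - 2` new
vertices, which lie outside `S`, belongs to at most one of the `k` trees. Hence at most
`k - 2` trees use a new vertex and at least two avoid them all; these two are subgraphs of
`G` and remain internally disjoint trees connecting `S` there.
-/

open SimpleGraph

/-- `F` is an internally disjoint family of trees connecting `S` in `G`: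
each member is a subgraph of `G` that is a tree containing all of `S`, the members are
pairwise edge-disjoint, and any two distinct members intersect exactly in `S`. -/
def IsIDTrees {V : Type*} (G : SimpleGraph V) (S : Set V) {ι : Type*} (F : ι → G.Subgraph) : Prop :=
  (∀ i, S ⊆ (F i).verts ∧ ((F i).coe).IsTree) ∧
    ∀ i j, i ≠ j → (F i).verts ∩ (F j).verts = S ∧ Disjoint (F i).edgeSet (F j).edgeSet

/-- Base adjacency of `G'`: the edges of `G` on the old vertices (`Sum.inl`), together with
an edge from each of the `p` new vertices (`Sum.inr`) to every vertex of `S`. -/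
def addRel {V : Type*} (G : SimpleGraph V) (S : Set V) {p : ℕ} :
    V ⊕ Fin p → V ⊕ Fin p → Prop
  | Sum.inl v, Sum.inl w => G.Adj v w
  | Sum.inr _, Sum.inl v => v ∈ S
  | _, _ => False

/-- The graph `G'` obtained from `G` by adding `p` new vertices, each joined to all
vertices of `S`. -/
def addGraph {V : Type*} (G : SimpleGraph V) (S : Set V) (p : ℕ) :
    SimpleGraph (V ⊕ Fin p) :=
  SimpleGraph.fromRel (addRel G S)

open Finset

namespace SimpleGraph

variable {V W : Type*} {G : SimpleGraph V} {G' : SimpleGraph W}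

noncomputable def Subgraph.comapIsoOfVertsSubsetRange (f : G ↪g G') (H : G'.Subgraph)
    (h : H.verts ⊆ Set.range f) : (H.comap f.toHom).coe ≃g H.coe where
  toEquiv := Equiv.ofBijective (fun x => ⟨f x, x.2⟩)
    ⟨fun x y hxy => Subtype.ext (f.injective (congrArg Subtype.val hxy)), fun ⟨w, hw⟩ => by
      obtain ⟨v, rfl⟩ := h hw
      exact ⟨⟨v, hw⟩, rfl⟩⟩
  map_rel_iff' {x y} := by
    change H.Adj (f x) (f y) ↔ G.Adj x y ∧ H.Adj (f x) (f y)
    exact ⟨fun hxy => ⟨f.map_adj_iff.mp (H.adj_sub hxy), hxy⟩, And.right⟩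

theorem Subgraph.isTree_coe_comap (f : G ↪g G') {H : G'.Subgraph}
    (h : H.verts ⊆ Set.range f) (hH : H.coe.IsTree) : (H.comap f.toHom).coe.IsTree :=
  (H.comapIsoOfVertsSubsetRange f h).isTree_iff.mpr hH

end SimpleGraph

namespace IsIDTrees

variable {V : Type*} {G : SimpleGraph V} {S : Set V} {ι : Type*} {F : ι → G.Subgraph}

theorem eq_of_mem_verts (hF : IsIDTrees G S F) {v : V} (hv : v ∉ S) {i j : ι}
    (hi : v ∈ (F i).verts) (hj : v ∈ (F j).verts) : i = j := by
  by_contra hij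
  exact hv ((hF.2 i j hij).1 ▸ ⟨hi, hj⟩)

open Classical in
theorem card_filter_exists_mem_verts_le [Fintype ι] {β : Type*} [Fintype β]
    (hF : IsIDTrees G S F) (g : β → V) (hg : ∀ b, g b ∉ S) :
    #{i | ∃ b, g b ∈ (F i).verts} ≤ Fintype.card β := by
  calc #{i | ∃ b, g b ∈ (F i).verts}
      ≤ #(univ.biUnion fun b => ({i | g b ∈ (F i).verts} : Finset ι)) := by
        refine card_le_card fun i hi => ?_
        simp only [mem_filter, mem_univ, true_and, mem_biUnion] at hi ⊢
        exact hi
    _ ≤ #(univ : Finset β) * 1 := card_biUnion_le_card_mul _ _ _ fun b _ =>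
        card_le_one.mpr fun i hi j hj => by
          simp only [mem_filter, mem_univ, true_and] at hi hj
          exact hF.eq_of_mem_verts (hg b) hi hj
    _ = Fintype.card β := by simp

theorem exists_ne_forall_notMem_verts [Fintype ι] {β : Type*} [Fintype β]
    (hF : IsIDTrees G S F) (g : β → V) (hg : ∀ b, g b ∉ S)
    (hcard : Fintype.card β + 2 ≤ Fintype.card ι) :
    ∃ i j, i ≠ j ∧ (∀ b, g b ∉ (F i).verts) ∧ ∀ b, g b ∉ (F j).verts := by
  classical
  have hbad := hF.card_filter_exists_mem_verts_le g hg
  have hgood : 1 < #({i | ∃ b, g b ∈ (F i).verts} : Finset ι)ᶜ := by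
    rw [card_compl]
    omega
  obtain ⟨i, hi, j, hj, hij⟩ := one_lt_card.mp hgood
  simp only [compl_filter, mem_filter, mem_univ, true_and, not_exists] at hi hj
  exact ⟨i, j, hij, hi, hj⟩

theorem comp_injective {ι' : Type*} (hF : IsIDTrees G S F) {e : ι' → ι}
    (he : Function.Injective e) : IsIDTrees G S (F ∘ e) :=
  ⟨fun i => hF.1 (e i), fun i j hij => hF.2 (e i) (e j) (he.ne hij)⟩

theorem comap {W : Type*} {G' : SimpleGraph W} {F : ι → G'.Subgraph} (f : G ↪g G')
    (hF : IsIDTrees G' (f '' S) F) (hrange : ∀ i, (F i).verts ⊆ Set.range f) :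
    IsIDTrees G S fun i => (F i).comap f.toHom := by
  refine ⟨fun i => ⟨?_, (F i).isTree_coe_comap f (hrange i) (hF.1 i).2⟩, fun i j hij => ⟨?_, ?_⟩⟩
  · exact fun v hv => (hF.1 i).1 ⟨v, hv, rfl⟩
  · rw [Subgraph.comap_verts, Subgraph.comap_verts, ← Set.preimage_inter, (hF.2 i j hij).1]
    exact f.injective.preimage_image S
  · refine Set.disjoint_left.mpr fun e hi hj => ?_
    induction e using Sym2.ind with
    | h v w =>
      exact Set.disjoint_left.mp (hF.2 i j hij).2 (Subgraph.mem_edgeSet.mpr hi.2)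
        (Subgraph.mem_edgeSet.mpr hj.2)

end IsIDTrees

def addGraphInl {V : Type*} (G : SimpleGraph V) (S : Set V) (p : ℕ) : G ↪g addGraph G S p where
  toFun := Sum.inl
  inj' := Sum.inl_injective
  map_rel_iff' {v w} := by
    change (Sum.inl v ≠ Sum.inl w ∧ (G.Adj v w ∨ G.Adj w v)) ↔ G.Adj v w
    exact ⟨fun h => h.2.elim id G.adj_symm, fun h => ⟨by simpa using h.ne, Or.inl h⟩⟩

theorem verts_subset_range_addGraphInl {V : Type*} {G : SimpleGraph V} {S : Set V} {p : ℕ}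
    {H : (addGraph G S p).Subgraph} (h : ∀ a, Sum.inr a ∉ H.verts) :
    H.verts ⊆ Set.range (addGraphInl G S p)
  | Sum.inl v, _ => ⟨v, rfl⟩
  | Sum.inr a, ha => absurd ha (h a)

theorem add_trees_to_trees_general {V : Type*} (G : SimpleGraph V) (S : Set V)
    (k : ℕ) (hk : 3 ≤ k)
    (F : Fin k → (addGraph G S (k - 2)).Subgraph)
    (hF : IsIDTrees (addGraph G S (k - 2)) (Sum.inl '' S) F) :
    (∃ i j : Fin k, i ≠ j ∧
        (∀ a : Fin (k - 2), Sum.inr a ∉ (F i).verts) ∧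
        (∀ a : Fin (k - 2), Sum.inr a ∉ (F j).verts)) ∧
      ∃ T : Fin 2 → G.Subgraph, IsIDTrees G S T := by
  obtain ⟨i, j, hij, hi, hj⟩ := hF.exists_ne_forall_notMem_verts Sum.inr (by simp)
    (by simp only [Fintype.card_fin]; omega)
  refine ⟨⟨i, j, hij, hi, hj⟩, _, IsIDTrees.comap (addGraphInl G S (k - 2))
    (hF.comp_injective (injective_pair_iff_ne.mpr hij))
    fun n => verts_subset_range_addGraphInl ?_⟩
  fin_cases n
  exacts [hi, hj]

/-- If `G'` (obtained from `G` by adding `k - 2` new vertices, each joined to all of `S`,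
with `|S| ≥ 2` and `k ≥ 3`) contains `k` internally disjoint trees connecting `S`, then
at least two of these `k` trees contain no new vertex, and consequently `G` contains two
internally disjoint trees connecting `S`. -/
theorem add_trees_to_trees {V : Type*} (G : SimpleGraph V) (S : Set V)
    (hS : S.Nontrivial) (k : ℕ) (hk : 3 ≤ k)
    (F : Fin k → (addGraph G S (k - 2)).Subgraph)
    (hF : IsIDTrees (addGraph G S (k - 2)) (Sum.inl '' S) F) :
    (∃ i j : Fin k, i ≠ j ∧
        (∀ a : Fin (k - 2), Sum.inr a ∉ (F i).verts) ∧
        (∀ a : Fin (k - 2), Sum.inr a ∉ (F j).verts)) ∧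
      ∃ T : Fin 2 → G.Subgraph, IsIDTrees G S T :=
  add_trees_to_trees_general G S k hk F hF
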